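/- arXiv:2205.02771 — 5 statements merged into one kernel-verified Lean document; each statement's English description precedes it below -/
import Mathlib

section
/- For any real numbers f(u) indexed by a finite set e with |e| ≥ 2, (max_{u∈e} f(u) + min_{v∈e} f(v))² ≤ (1/(|e|-1)) · Σ_{{u,v}⊆e, u≠v} (f(u)+f(v))². -/
theorem stmt_0 {V : Type*} [DecidableEq V] (e : Finset V) (he : 2 ≤ e.card)
    (hne : e.Nonempty) (f : V → ℝ) :
    (e.sup' hne f + e.inf' hne f) ^ 2 ≤
      (1 / ((e.card : ℝ) - 1)) *
        ((1 / 2) * ∑ p ∈ e.offDiag, (f p.1 + f p.2) ^ 2) := by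
  obtain ⟨u₀, hu₀e, hu₀⟩ := Finset.exists_mem_eq_sup' hne f
  have hM : ∀ v ∈ e, f v ≤ f u₀ := fun v hv => hu₀ ▸ Finset.le_sup' f hv
  obtain ⟨v₀, hv₀e, hv₀ne, hv₀⟩ : ∃ v₀ ∈ e, v₀ ≠ u₀ ∧ f v₀ = e.inf' hne f := by
    obtain ⟨v₁, hv₁e, hv₁⟩ := Finset.exists_mem_eq_inf' hne f
    by_cases h : v₁ = u₀
    · obtain ⟨w, hwe, hwne⟩ := Finset.exists_mem_ne (s := e) (by omega) u₀
      have h1 : e.inf' hne f ≤ f w := Finset.inf'_le f hwe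
      have h2 : f w ≤ f u₀ := hM w hwe
      refine ⟨w, hwe, hwne, le_antisymm ?_ h1⟩
      rw [hv₁, h]; exact h2
    · exact ⟨v₁, hv₁e, h, hv₁.symm⟩
  have hm : ∀ v ∈ e, f v₀ ≤ f v := fun v hv => hv₀ ▸ Finset.inf'_le f hv
  set M := f u₀ with hMdef
  set m := f v₀ with hmdef
  set s₀ := e.erase u₀ with hs₀
  have hv₀s₀ : v₀ ∈ s₀ := Finset.mem_erase.2 ⟨hv₀ne, hv₀e⟩
  set s₁ := s₀.erase v₀ with hs₁
  have key : ∀ v ∈ s₁, (M + m) ^ 2 ≤ (M + f v) ^ 2 + (m + f v) ^ 2 := by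
    intro v hv
    have hve : v ∈ e := Finset.mem_of_mem_erase (Finset.mem_of_mem_erase hv)
    have h1 := hM v hve
    have h2 := hm v hve
    nlinarith [mul_nonneg (sub_nonneg.2 h1) (sub_nonneg.2 h2), sq_nonneg (f v)]
  set g : V × V → ℝ := fun p => (f p.1 + f p.2) ^ 2 with hg
  set A := ({u₀} : Finset V) ×ˢ s₀ with hA
  set B := s₀ ×ˢ ({u₀} : Finset V) with hB
  set C := ({v₀} : Finset V) ×ˢ s₁ with hC
  set D := s₁ ×ˢ ({v₀} : Finset V) with hD
  set T := A ∪ (B ∪ (C ∪ D)) with hT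
  have hsubset : T ⊆ e.offDiag := by
    intro p hp
    simp only [hT, hA, hB, hC, hD, Finset.mem_union, Finset.mem_product,
      Finset.mem_singleton, hs₁, hs₀, Finset.mem_erase] at hp
    rw [Finset.mem_offDiag]
    rcases hp with ⟨h1, h2, h3⟩ | ⟨⟨h2, h3⟩, h1⟩ | ⟨h1, h2, h3, h4⟩ | ⟨⟨h2, h3, h4⟩, h1⟩ <;>
      subst h1 <;> simp_all <;> tauto
  have hdCD : Disjoint C D := by
    rw [Finset.disjoint_left]
    rintro ⟨a, b⟩ hp hq
    simp only [hC, hD, Finset.mem_product, Finset.mem_singleton, hs₁, hs₀,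
      Finset.mem_erase] at hp hq
    obtain ⟨h1, -⟩ := hp
    obtain ⟨⟨h2, -⟩, -⟩ := hq
    exact h2 h1
  have hdBCD : Disjoint B (C ∪ D) := by
    rw [Finset.disjoint_left]
    rintro ⟨a, b⟩ hp hq
    simp only [hB, hC, hD, Finset.mem_union, Finset.mem_product, Finset.mem_singleton, hs₁, hs₀,
      Finset.mem_erase] at hp hq
    obtain ⟨-, h2⟩ := hp
    rcases hq with ⟨-, -, h4, -⟩ | ⟨-, h4⟩
    · exact h4 h2
    · exact hv₀ne (h4.symm.trans h2)
  have hdA : Disjoint A (B ∪ (C ∪ D)) := by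
    rw [Finset.disjoint_left]
    rintro ⟨a, b⟩ hp hq
    simp only [hA, hB, hC, hD, Finset.mem_union, Finset.mem_product, Finset.mem_singleton,
      hs₁, hs₀, Finset.mem_erase] at hp hq
    obtain ⟨h1, -⟩ := hp
    rcases hq with ⟨⟨h3, -⟩, -⟩ | ⟨h3, -⟩ | ⟨⟨-, h3, -⟩, -⟩
    · exact h3 h1
    · exact hv₀ne (h3.symm.trans h1)
    · exact h3 h1
  have hsumA : ∑ p ∈ A, g p = ∑ v ∈ s₀, (M + f v) ^ 2 := by
    rw [hA, Finset.sum_product, Finset.sum_singleton]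
  have hsumB : ∑ p ∈ B, g p = ∑ v ∈ s₀, (M + f v) ^ 2 := by
    rw [hB, Finset.sum_product]
    exact Finset.sum_congr rfl fun v hv => by rw [Finset.sum_singleton]; ring
  have hsumC : ∑ p ∈ C, g p = ∑ v ∈ s₁, (m + f v) ^ 2 := by
    rw [hC, Finset.sum_product, Finset.sum_singleton]
  have hsumD : ∑ p ∈ D, g p = ∑ v ∈ s₁, (m + f v) ^ 2 := by
    rw [hD, Finset.sum_product]
    exact Finset.sum_congr rfl fun v hv => by rw [Finset.sum_singleton]; ring
  have hsplit : ∑ v ∈ s₀, (M + f v) ^ 2 = (M + m) ^ 2 + ∑ v ∈ s₁, (M + f v) ^ 2 := by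
    rw [← Finset.insert_erase hv₀s₀, Finset.sum_insert (Finset.notMem_erase _ _)]
  have hsumT : ∑ p ∈ T, g p =
      2 * (M + m) ^ 2 + 2 * ∑ v ∈ s₁, ((M + f v) ^ 2 + (m + f v) ^ 2) := by
    rw [hT, Finset.sum_union hdA, Finset.sum_union hdBCD, Finset.sum_union hdCD,
      hsumA, hsumB, hsumC, hsumD, hsplit, Finset.sum_add_distrib]
    ring
  have hcard : (s₁.card : ℝ) = (e.card : ℝ) - 2 := by
    have : s₁.card = e.card - 2 := by
      rw [hs₁, Finset.card_erase_of_mem hv₀s₀, hs₀, Finset.card_erase_of_mem hu₀e]; omega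
    rw [this, Nat.cast_sub he]; norm_num
  have hlow : (s₁.card : ℝ) * (M + m) ^ 2 ≤ ∑ v ∈ s₁, ((M + f v) ^ 2 + (m + f v) ^ 2) := by
    calc (s₁.card : ℝ) * (M + m) ^ 2 = ∑ _v ∈ s₁, (M + m) ^ 2 := by
          rw [Finset.sum_const, nsmul_eq_mul]
      _ ≤ _ := Finset.sum_le_sum key
  have hTle : ∑ p ∈ T, g p ≤ ∑ p ∈ e.offDiag, g p :=
    Finset.sum_le_sum_of_subset_of_nonneg hsubset fun p _ _ => sq_nonneg _
  have hn : (2 : ℝ) ≤ (e.card : ℝ) := by exact_mod_cast he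
  have hfinal : 2 * ((e.card : ℝ) - 1) * (M + m) ^ 2 ≤ ∑ p ∈ e.offDiag, g p := by
    calc 2 * ((e.card : ℝ) - 1) * (M + m) ^ 2
        = 2 * (M + m) ^ 2 + 2 * (((e.card : ℝ) - 2) * (M + m) ^ 2) := by ring
      _ ≤ 2 * (M + m) ^ 2 + 2 * ∑ v ∈ s₁, ((M + f v) ^ 2 + (m + f v) ^ 2) := by
          rw [← hcard]; linarith [hlow]
      _ = ∑ p ∈ T, g p := hsumT.symm
      _ ≤ _ := hTle
  rw [hu₀, ← hv₀]
  rw [div_mul_eq_mul_div, one_mul, le_div_iff₀ (by linarith)]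
  have hgS : ∑ p ∈ e.offDiag, (f p.1 + f p.2) ^ 2 = ∑ p ∈ e.offDiag, g p := rfl
  rw [hgS]
  linarith [hfinal]
end

section
/- Let a, b be real numbers and let t be chosen uniformly at random from [0, 1], where a², b² ≤ 1. Define x_t(a) = 1 if a ≥ √t, x_t(a) = -1 if a ≤ -√t, and x_t(a) = 0 otherwise (similarly for b). Then E[|x_t(a) + x_t(b)|] ≤ |a + b| · (|a| + |b|). -/
/-!
For `t > 0` the rounding `x_t` is monotone and odd, so `x_t(a) + x_t(b)` has the sign of `a + b`
for every `t`, and the expectation of its absolute value is the absolute value of its expectation.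
As `x_t(a) = sign a · 𝟙[t ≤ a²]`, that expectation is `a|a| + b|b|`, and
`|a|a| + b|b|| ≤ |a + b| (|a| + |b|)` by a case analysis on signs.
-/

/-- The two-sided threshold rounding of a value `a` at threshold `t`. -/
noncomputable def roundVal (t a : ℝ) : ℝ :=
  if Real.sqrt t ≤ a then 1 else if a ≤ -Real.sqrt t then -1 else 0

open MeasureTheory Set intervalIntegral Interval

theorem intervalIntegral.integral_abs_eq_abs_integral {f : ℝ → ℝ} {a b : ℝ} (hab : a ≤ b)
    (hf : (∀ t ∈ Ioc a b, 0 ≤ f t) ∨ ∀ t ∈ Ioc a b, f t ≤ 0) :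
    ∫ t in a..b, |f t| = |∫ t in a..b, f t| := by
  have hnonneg : 0 ≤ ∫ t in a..b, |f t| := integral_nonneg_of_forall hab fun _ => abs_nonneg _
  rcases hf with hf | hf
  · have hcongr : ∫ t in a..b, |f t| = ∫ t in a..b, f t :=
      integral_congr_ae (ae_of_all _ fun t ht => abs_of_nonneg (hf t (uIoc_of_le hab ▸ ht)))
    rw [hcongr, abs_of_nonneg (hcongr ▸ hnonneg)]
  · have hcongr : ∫ t in a..b, |f t| = -∫ t in a..b, f t := by
      rw [← integral_neg]
      exact integral_congr_ae (ae_of_all _ fun t ht => abs_of_nonpos (hf t (uIoc_of_le hab ▸ ht)))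
    rw [hcongr, abs_of_nonpos (neg_nonneg.1 (hcongr ▸ hnonneg))]

theorem intervalIntegrable_indicator_Iic_const (c k : ℝ) {a b : ℝ} :
    IntervalIntegrable ((Iic c).indicator fun _ => k) volume a b :=
  let hk : IntervalIntegrable (fun _ => k) volume a b := intervalIntegrable_const
  ⟨hk.1.indicator measurableSet_Iic, hk.2.indicator measurableSet_Iic⟩

theorem abs_mul_abs_add_mul_abs_le (a b : ℝ) :
    |(a * |a| + b * |b|)| ≤ |a + b| * (|a| + |b|) := by
  rcases abs_cases a with ⟨ha, _⟩ | ⟨ha, _⟩ <;>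
    rcases abs_cases b with ⟨hb, _⟩ | ⟨hb, _⟩ <;>
    rcases abs_cases (a + b) with ⟨hab, _⟩ | ⟨hab, _⟩ <;> rw [ha, hb, hab] <;>
    exact abs_le.2 ⟨by nlinarith, by nlinarith⟩

theorem roundVal_mono (t : ℝ) : Monotone (roundVal t) := by
  intro a b hab
  have := Real.sqrt_nonneg t
  unfold roundVal
  split_ifs <;> linarith

theorem roundVal_neg {t : ℝ} (ht : 0 < t) (a : ℝ) : roundVal t (-a) = -roundVal t a := by
  have := Real.sqrt_pos.2 ht
  unfold roundVal
  split_ifs <;> linarith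

theorem roundVal_add_nonneg {t a b : ℝ} (ht : 0 < t) (hab : 0 ≤ a + b) :
    0 ≤ roundVal t a + roundVal t b := by
  have := roundVal_mono t (neg_le_iff_add_nonneg.2 hab)
  rw [roundVal_neg ht] at this
  linarith

theorem roundVal_add_nonpos {t a b : ℝ} (ht : 0 < t) (hab : a + b ≤ 0) :
    roundVal t a + roundVal t b ≤ 0 := by
  have := roundVal_add_nonneg (a := -a) (b := -b) ht (by linarith)
  rw [roundVal_neg ht, roundVal_neg ht] at this
  linarith

theorem roundVal_eqOn_indicator (a : ℝ) :
    EqOn (roundVal · a) ((Iic (a ^ 2)).indicator fun _ => (SignType.sign a : ℝ)) (Ioi 0) := by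
  intro t (ht : 0 < t)
  have hs := Real.sqrt_pos.2 ht
  have hsq := Real.sq_sqrt ht.le
  simp only [roundVal, indicator_apply, mem_Iic]
  rcases lt_trichotomy a 0 with h | h | h <;> simp only [sign_neg, sign_zero, sign_pos, h] <;>
    split_ifs <;> first | rfl | (exfalso; nlinarith)

theorem uIoc_zero_one_subset_Ioi : Ι (0 : ℝ) 1 ⊆ Ioi 0 :=
  uIoc_of_le (zero_le_one' ℝ) ▸ Ioc_subset_Ioi_self

theorem intervalIntegrable_roundVal (a : ℝ) : IntervalIntegrable (roundVal · a) volume 0 1 :=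
  (intervalIntegrable_congr ((roundVal_eqOn_indicator a).mono uIoc_zero_one_subset_Ioi)).2
    (intervalIntegrable_indicator_Iic_const _ _)

theorem integral_roundVal {a : ℝ} (ha : a ^ 2 ≤ 1) :
    ∫ t in (0 : ℝ)..1, roundVal t a = a * |a| :=
  calc ∫ t in (0 : ℝ)..1, roundVal t a
      = ∫ t in (0 : ℝ)..1, {s | s ≤ a ^ 2}.indicator (fun _ => (SignType.sign a : ℝ)) t :=
        integral_congr_ae <| ae_of_all _ fun _ ht =>
          roundVal_eqOn_indicator a (uIoc_zero_one_subset_Ioi ht)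
    _ = a ^ 2 * SignType.sign a := by simp [integral_indicator ⟨sq_nonneg a, ha⟩]
    _ = a * |a| := by rw [← sq_abs, sq, mul_assoc, abs_mul_sign, mul_comm]

theorem stmt_2 (a b : ℝ) (ha : a ^ 2 ≤ 1) (hb : b ^ 2 ≤ 1) :
    ∫ t in (0:ℝ)..1, |roundVal t a + roundVal t b| ≤ |a + b| * (|a| + |b|) := by
  have hsign : (∀ t ∈ Ioc (0 : ℝ) 1, 0 ≤ roundVal t a + roundVal t b) ∨
      ∀ t ∈ Ioc (0 : ℝ) 1, roundVal t a + roundVal t b ≤ 0 :=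
    (le_total 0 (a + b)).imp (fun h _ ht => roundVal_add_nonneg ht.1 h)
      fun h _ ht => roundVal_add_nonpos ht.1 h
  rw [integral_abs_eq_abs_integral zero_le_one hsign,
    integral_add (intervalIntegrable_roundVal a) (intervalIntegrable_roundVal b),
    integral_roundVal ha, integral_roundVal hb]
  exact abs_mul_abs_add_mul_abs_le a b
end

section
/- Let H be a hypergraph and G its clique reduction, where each hyperedge e of rank r(e) ≥ 2 is replaced by a clique on its vertices with each clique-edge weight w(e)/(r(e)-1). Then for any vector f, fᵀ J_H f ≤ fᵀ J_G f, where fᵀ J_H f = Σ_e w(e)·(max_{u∈e} f(u) + min_{v∈e} f(v))² and fᵀ J_G f = Σ_e w(e)/(r(e)-1) · Σ_{{u,v}⊆e} (f(u)+f(v))². -/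
/-!
Fix a hyperedge `e` with `n ≥ 2` vertices and let `a`, `b ∈ e` be distinct vertices where `f`
attains its maximum `M` and minimum `m` on `e`. Since `m ≤ f u ≤ M`,
`(M + m)² ≤ (M + f u)² + (f u + m)²`, so the clique edge `{a, b}` together with the `n - 2` paths
`a – u – b` through the other vertices are `n - 1` edge-disjoint routes, each carrying at least
`(M + m)²` of the clique's quadratic form. Hence `(n - 1)(M + m)²` is at most the clique sum, and
the theorem follows by weighting with `w e / (n - 1)` and summing over the hyperedges.
-/

open Finset

lemma sq_add_le_sq_add_add_sq_add {M m x : ℝ} (hm : m ≤ x) (hM : x ≤ M) :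
    (M + m) ^ 2 ≤ (M + x) ^ 2 + (x + m) ^ 2 := by
  nlinarith [mul_nonneg (sub_nonneg.2 hm) (sub_nonneg.2 hM), sq_nonneg x]

section

variable {α : Type*} [DecidableEq α]

lemma sum_offDiag_eq_sum_sum_erase {β : Type*} [AddCommMonoid β] (s : Finset α)
    (g : α × α → β) :
    ∑ p ∈ s.offDiag, g p = ∑ u ∈ s, ∑ v ∈ s.erase u, g (u, v) :=
  sum_finset_product _ _ _ fun p => by
    rw [mem_offDiag, mem_erase]
    tauto

lemma add_le_sum_erase {β : Type*} [AddCommMonoid β] [PartialOrder β] [IsOrderedAddMonoid β]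
    {s : Finset α} {g : α → β} (hg : ∀ v ∈ s, 0 ≤ g v) {a b u : α}
    (ha : a ∈ s) (hb : b ∈ s) (hab : a ≠ b) (hua : u ≠ a) (hub : u ≠ b) :
    g a + g b ≤ ∑ v ∈ s.erase u, g v := by
  rw [← sum_pair hab]
  refine sum_le_sum_of_subset_of_nonneg ?_ fun v hv _ => hg v (mem_of_mem_erase hv)
  intro v hv
  rcases mem_insert.1 hv with rfl | hv
  · exact mem_erase.2 ⟨hua.symm, ha⟩
  · rw [mem_singleton.1 hv]
    exact mem_erase.2 ⟨hub.symm, hb⟩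

lemma Finset.Nontrivial.exists_ne_forall_le_and_le {s : Finset α} (hs : s.Nontrivial)
    (f : α → ℝ) : ∃ a ∈ s, ∃ b ∈ s, a ≠ b ∧ ∀ u ∈ s, f b ≤ f u ∧ f u ≤ f a := by
  obtain ⟨a, ha, hmax⟩ := s.exists_max_image f hs.nonempty
  obtain ⟨b, hb, hmin⟩ := (s.erase a).exists_min_image f (hs.erase_nonempty)
  refine ⟨a, ha, b, mem_of_mem_erase hb, (ne_of_mem_erase hb).symm, fun u hu => ⟨?_, hmax u hu⟩⟩
  by_cases hua : u = a
  · exact hua ▸ hmax b (mem_of_mem_erase hb)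
  · exact hmin u (mem_erase.2 ⟨hua, hu⟩)

lemma two_mul_card_sub_one_mul_sq_le_sum_offDiag {s : Finset α} {f : α → ℝ} {a b : α}
    (ha : a ∈ s) (hb : b ∈ s) (hab : a ≠ b) (hext : ∀ u ∈ s, f b ≤ f u ∧ f u ≤ f a) :
    2 * ((#s : ℝ) - 1) * (f a + f b) ^ 2 ≤ ∑ p ∈ s.offDiag, (f p.1 + f p.2) ^ 2 := by
  set K := (f a + f b) ^ 2
  set R : α → ℝ := fun u => ∑ v ∈ s.erase u, (f u + f v) ^ 2
  set T := (s.erase a).erase b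
  have hba : b ∈ s.erase a := mem_erase.2 ⟨hab.symm, hb⟩
  have hab' : a ∈ s.erase b := mem_erase.2 ⟨hab, ha⟩
  have hT : ∀ u ∈ T, u ∈ s ∧ u ≠ a ∧ u ≠ b := fun u hu => by
    simp only [T, mem_erase] at hu
    exact ⟨hu.2.2, hu.2.1, hu.1⟩
  have hcard : (#T : ℝ) = #s - 2 := by
    have : #T + 2 = #s := by rw [← card_erase_add_one ha, ← card_erase_add_one hba]
    rw [← this]
    push_cast
    ring
  have hpath : ∀ u ∈ s, K ≤ (f u + f a) ^ 2 + (f u + f b) ^ 2 := fun u hu =>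
    (sq_add_le_sq_add_add_sq_add (hext u hu).1 (hext u hu).2).trans_eq (by ring)
  have hrows : ∑ u ∈ s, R u = R a + R b + ∑ u ∈ T, R u := by
    rw [← add_sum_erase _ R ha, ← add_sum_erase _ R hba, add_assoc]
  have hRa : R a = K + ∑ v ∈ T, (f a + f v) ^ 2 := (add_sum_erase _ _ hba).symm
  have hRb : R b = K + ∑ v ∈ T, (f b + f v) ^ 2 := by
    rw [show T = (s.erase b).erase a from erase_right_comm, show K = (f b + f a) ^ 2 by ring]
    exact (add_sum_erase _ _ hab').symm
  have hRT : #T * K ≤ ∑ u ∈ T, R u := by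
    rw [← nsmul_eq_mul]
    refine card_nsmul_le_sum _ _ _ fun u hu => (hpath u (hT u hu).1).trans ?_
    exact add_le_sum_erase (g := fun v => (f u + f v) ^ 2) (fun _ _ => sq_nonneg _) ha hb hab
      (hT u hu).2.1 (hT u hu).2.2
  have hRab : #T * K ≤ ∑ v ∈ T, (f a + f v) ^ 2 + ∑ v ∈ T, (f b + f v) ^ 2 := by
    rw [← sum_add_distrib, ← nsmul_eq_mul]
    exact card_nsmul_le_sum _ _ _ fun v hv => (hpath v (hT v hv).1).trans_eq (by ring)
  rw [sum_offDiag_eq_sum_sum_erase, hrows, hRa, hRb]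
  linarith [show 2 * ((#s : ℝ) - 1) * K = 2 * K + 2 * (#T * K) by rw [hcard]; ring]

lemma card_sub_one_mul_sq_sup'_add_inf'_le {s : Finset α} (hs : s.Nontrivial) (f : α → ℝ) :
    ((#s : ℝ) - 1) * (s.sup' hs.nonempty f + s.inf' hs.nonempty f) ^ 2 ≤
      1 / 2 * ∑ p ∈ s.offDiag, (f p.1 + f p.2) ^ 2 := by
  obtain ⟨a, ha, b, hb, hab, hext⟩ := hs.exists_ne_forall_le_and_le f
  have hsup : s.sup' hs.nonempty f = f a :=
    le_antisymm (sup'_le _ _ fun u hu => (hext u hu).2) (le_sup' f ha)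
  have hinf : s.inf' hs.nonempty f = f b :=
    le_antisymm (inf'_le f hb) (le_inf' _ _ fun u hu => (hext u hu).1)
  rw [hsup, hinf]
  linarith [two_mul_card_sub_one_mul_sq_le_sum_offDiag ha hb hab hext]

end

theorem stmt_7 {V : Type*} [DecidableEq V] (E : Finset (Finset V))
    (w : Finset V → ℝ) (hw : ∀ e ∈ E, 0 < w e)
    (hrank : ∀ e ∈ E, 2 ≤ e.card) (f : V → ℝ) :
    ∑ e ∈ E.attach,
        w e.1 * (e.1.sup' (Finset.card_pos.mp (by have := hrank e.1 e.2; omega)) f +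
          e.1.inf' (Finset.card_pos.mp (by have := hrank e.1 e.2; omega)) f) ^ 2
      ≤ ∑ e ∈ E.attach,
          w e.1 / ((e.1.card : ℝ) - 1) *
            ((1 / 2) * ∑ p ∈ e.1.offDiag, (f p.1 + f p.2) ^ 2) := by
  refine sum_le_sum fun e _ => ?_
  have he : e.1.Nontrivial := one_lt_card_iff_nontrivial.1 (hrank e.1 e.2)
  have hcard : (0 : ℝ) < (#e.1 : ℝ) - 1 := by
    have : (2 : ℝ) ≤ #e.1 := by exact_mod_cast hrank e.1 e.2
    linarith
  have hwe : 0 ≤ w e.1 / ((#e.1 : ℝ) - 1) := (div_pos (hw e.1 e.2) hcard).le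
  calc w e.1 * (e.1.sup' he.nonempty f + e.1.inf' he.nonempty f) ^ 2
      = w e.1 / ((#e.1 : ℝ) - 1) *
          (((#e.1 : ℝ) - 1) * (e.1.sup' he.nonempty f + e.1.inf' he.nonempty f) ^ 2) := by
        field_simp
    _ ≤ _ := mul_le_mul_of_nonneg_left (card_sub_one_mul_sq_sup'_add_inf'_le he f) hwe
end

section
/- For any hypergraph H and disjoint sets L, R ⊆ V, the indicator vector χ with χ(u)=1 on L, χ(u)=-1 on R, and 0 elsewhere satisfies D(χ) ≤ 2·β_H(L,R), where D is the discrepancy ratio and β_H is the hypergraph bipartiteness ratio. -/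
open scoped Classical

/-- `w(A,B|C)`: total weight of hyperedges intersecting both `A` and `B` and avoiding `C`. -/
noncomputable def cutw {V : Type*} [DecidableEq V] (E : Finset (Finset V))
    (w : Finset V → ℝ) (A B C : Finset V) : ℝ :=
  ∑ e ∈ E, if (e ∩ A).Nonempty ∧ (e ∩ B).Nonempty ∧ e ∩ C = ∅ then w e else 0

/-- Degree of a vertex in a weighted hypergraph. -/
noncomputable def degH {V : Type*} (E : Finset (Finset V)) (w : Finset V → ℝ) (v : V) : ℝ :=
  ∑ e ∈ E, if v ∈ e then w e else 0

/-- Volume of a vertex set. -/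
noncomputable def volH {V : Type*} (E : Finset (Finset V)) (w : Finset V → ℝ)
    (S : Finset V) : ℝ :=
  ∑ v ∈ S, degH E w v

/-- The hypergraph bipartiteness ratio `β_H(L,R)`. -/
noncomputable def betaH {V : Type*} [Fintype V] [DecidableEq V] (E : Finset (Finset V))
    (w : Finset V → ℝ) (L R : Finset V) : ℝ :=
  (2 * cutw E w L L Lᶜ + 2 * cutw E w R R Rᶜ +
      cutw E w L (L ∪ R)ᶜ R + cutw E w R (L ∪ R)ᶜ L) / volH E w (L ∪ R)

/-- The discrepancy ratio `D(f)` of a hypergraph, given a proof that edges are nonempty. -/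
noncomputable def discH {V : Type*} (E : Finset (Finset V)) (w : Finset V → ℝ)
    (hE : ∀ e ∈ E, e.Nonempty) (deg : V → ℝ) [Fintype V] (f : V → ℝ) : ℝ :=
  (∑ e ∈ E.attach, w e.1 * (e.1.sup' (hE e.1 e.2) f + e.1.inf' (hE e.1 e.2) f) ^ 2) /
    (∑ v, deg v * f v ^ 2)

theorem stmt_9 {V : Type*} [Fintype V] [DecidableEq V]
    (E : Finset (Finset V)) (w : Finset V → ℝ) (hw : ∀ e ∈ E, 0 < w e)
    (hE : ∀ e ∈ E, e.Nonempty)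
    (L R : Finset V) (hdisj : Disjoint L R) (hLR : (L ∪ R).Nonempty)
    (hdegpos : ∀ v, 0 < degH E w v)
    (χ : V → ℝ) (hχ : ∀ u, χ u = if u ∈ L then 1 else if u ∈ R then -1 else 0) :
    discH E w hE (degH E w) χ ≤ 2 * betaH E w L R := by
  classical
  -- values of χ
  have hχL : ∀ u ∈ L, χ u = 1 := by intro u hu; rw [hχ]; simp [hu]
  have hχR : ∀ u ∈ R, χ u = -1 := by
    intro u hu
    have hnL : u ∉ L := fun h => Finset.disjoint_left.1 hdisj h hu
    rw [hχ]; simp [hnL, hu]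
  have hχ0 : ∀ u, u ∉ L → u ∉ R → χ u = 0 := by
    intro u h1 h2; rw [hχ]; simp [h1, h2]
  have hle1 : ∀ u, χ u ≤ 1 := by
    intro u; rw [hχ]; split_ifs <;> norm_num
  have hgem1 : ∀ u, -1 ≤ χ u := by
    intro u; rw [hχ]; split_ifs <;> norm_num
  -- denominator
  have hvol : (0:ℝ) < volH E w (L ∪ R) := Finset.sum_pos (fun v _ => hdegpos v) hLR
  have hden : (∑ v, degH E w v * χ v ^ 2) = volH E w (L ∪ R) := by
    have hpt : ∀ v : V, degH E w v * χ v ^ 2 = if v ∈ L ∪ R then degH E w v else 0 := by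
      intro v
      by_cases h1 : v ∈ L
      · simp [hχL v h1, Finset.mem_union, h1]
      · by_cases h2 : v ∈ R
        · simp [hχR v h2, Finset.mem_union, h2]
        · simp [hχ0 v h1 h2, Finset.mem_union, h1, h2]
    rw [Finset.sum_congr rfl (fun v _ => hpt v), Finset.sum_ite_mem, Finset.univ_inter, volH]
  -- numerator inequality
  set N := 2 * cutw E w L L Lᶜ + 2 * cutw E w R R Rᶜ +
      cutw E w L (L ∪ R)ᶜ R + cutw E w R (L ∪ R)ᶜ L with hN
  set F : Finset V → ℝ := fun e =>
    if h : e.Nonempty then w e * (e.sup' h χ + e.inf' h χ) ^ 2 else 0 with hF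
  set G : Finset V → ℝ := fun e =>
    2 * (2 * (if (e ∩ L).Nonempty ∧ (e ∩ L).Nonempty ∧ e ∩ Lᶜ = ∅ then w e else 0) +
         2 * (if (e ∩ R).Nonempty ∧ (e ∩ R).Nonempty ∧ e ∩ Rᶜ = ∅ then w e else 0) +
         (if (e ∩ L).Nonempty ∧ (e ∩ (L ∪ R)ᶜ).Nonempty ∧ e ∩ R = ∅ then w e else 0) +
         (if (e ∩ R).Nonempty ∧ (e ∩ (L ∪ R)ᶜ).Nonempty ∧ e ∩ L = ∅ then w e else 0)) with hG
  have key : ∀ e ∈ E, F e ≤ G e := by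
    intro e he
    have hne := hE e he
    have hwe := hw e he
    rw [hF, hG]; simp only [dif_pos hne]
    have nn : ∀ (P : Prop) [Decidable P], (0:ℝ) ≤ (if P then w e else 0) := by
      intro P _; split
      · exact le_of_lt hwe
      · exact le_refl 0
    by_cases hL : (e ∩ L).Nonempty
    · have hsup : e.sup' hne χ = 1 := by
        obtain ⟨u, hu⟩ := hL
        rw [Finset.mem_inter] at hu
        refine le_antisymm (Finset.sup'_le _ _ fun b _ => hle1 b) ?_
        calc (1:ℝ) = χ u := (hχL u hu.2).symm
        _ ≤ _ := Finset.le_sup' χ hu.1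
      by_cases hR : (e ∩ R).Nonempty
      · have hinf : e.inf' hne χ = -1 := by
          obtain ⟨u, hu⟩ := hR
          rw [Finset.mem_inter] at hu
          refine le_antisymm ?_ (Finset.le_inf' _ _ fun b _ => hgem1 b)
          calc e.inf' hne χ ≤ χ u := Finset.inf'_le χ hu.1
          _ = -1 := hχR u hu.2
        rw [hsup, hinf]
        have n1 := nn ((e ∩ L).Nonempty ∧ (e ∩ L).Nonempty ∧ e ∩ Lᶜ = ∅)
        have n2 := nn ((e ∩ R).Nonempty ∧ (e ∩ R).Nonempty ∧ e ∩ Rᶜ = ∅)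
        have n3 := nn ((e ∩ L).Nonempty ∧ (e ∩ (L ∪ R)ᶜ).Nonempty ∧ e ∩ R = ∅)
        have n4 := nn ((e ∩ R).Nonempty ∧ (e ∩ (L ∪ R)ᶜ).Nonempty ∧ e ∩ L = ∅)
        nlinarith [hwe]
      · by_cases hO : (e ∩ (L ∪ R)ᶜ).Nonempty
        · have hinf : e.inf' hne χ = 0 := by
            obtain ⟨u, hu⟩ := hO
            rw [Finset.mem_inter, Finset.mem_compl, Finset.mem_union] at hu
            push_neg at hu
            refine le_antisymm ?_ ?_
            · calc e.inf' hne χ ≤ χ u := Finset.inf'_le χ hu.1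
              _ = 0 := hχ0 u hu.2.1 hu.2.2
            · refine Finset.le_inf' _ _ fun b hb => ?_
              have hbR : b ∉ R := fun h => hR ⟨b, Finset.mem_inter.2 ⟨hb, h⟩⟩
              by_cases hbL : b ∈ L
              · rw [hχL b hbL]; norm_num
              · rw [hχ0 b hbL hbR]
          have hP3 : (e ∩ L).Nonempty ∧ (e ∩ (L ∪ R)ᶜ).Nonempty ∧ e ∩ R = ∅ :=
            ⟨hL, hO, Finset.not_nonempty_iff_eq_empty.1 hR⟩
          rw [hsup, hinf, if_pos hP3]
          have n1 := nn ((e ∩ L).Nonempty ∧ (e ∩ L).Nonempty ∧ e ∩ Lᶜ = ∅)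
          have n2 := nn ((e ∩ R).Nonempty ∧ (e ∩ R).Nonempty ∧ e ∩ Rᶜ = ∅)
          have n4 := nn ((e ∩ R).Nonempty ∧ (e ∩ (L ∪ R)ᶜ).Nonempty ∧ e ∩ L = ∅)
          nlinarith [hwe]
        · have heL : e ∩ Lᶜ = ∅ := by
            rw [← Finset.not_nonempty_iff_eq_empty]
            rintro ⟨u, hu⟩
            rw [Finset.mem_inter, Finset.mem_compl] at hu
            have huR : u ∉ R := fun h => hR ⟨u, Finset.mem_inter.2 ⟨hu.1, h⟩⟩
            have huO : u ∉ (L ∪ R)ᶜ := fun h => hO ⟨u, Finset.mem_inter.2 ⟨hu.1, h⟩⟩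
            rw [Finset.mem_compl, Finset.mem_union, not_not] at huO
            exact hu.2 (huO.resolve_right huR)
          have hinf : e.inf' hne χ = 1 := by
            obtain ⟨u, hu⟩ := hL
            rw [Finset.mem_inter] at hu
            refine le_antisymm ?_ ?_
            · calc e.inf' hne χ ≤ χ u := Finset.inf'_le χ hu.1
              _ = 1 := hχL u hu.2
            · refine Finset.le_inf' _ _ fun b hb => ?_
              have hbL : b ∈ L := by
                by_contra hnb
                have hmem : b ∈ e ∩ Lᶜ := Finset.mem_inter.2 ⟨hb, Finset.mem_compl.2 hnb⟩
                rw [heL] at hmem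
                exact absurd hmem (Finset.notMem_empty b)
              rw [hχL b hbL]
          rw [hsup, hinf]
          have hP1 : (e ∩ L).Nonempty ∧ (e ∩ L).Nonempty ∧ e ∩ Lᶜ = ∅ := ⟨hL, hL, heL⟩
          rw [if_pos hP1]
          have n2 := nn ((e ∩ R).Nonempty ∧ (e ∩ R).Nonempty ∧ e ∩ Rᶜ = ∅)
          have n3 := nn ((e ∩ L).Nonempty ∧ (e ∩ (L ∪ R)ᶜ).Nonempty ∧ e ∩ R = ∅)
          have n4 := nn ((e ∩ R).Nonempty ∧ (e ∩ (L ∪ R)ᶜ).Nonempty ∧ e ∩ L = ∅)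
          nlinarith [hwe]
    · have hsup_le : ∀ b ∈ e, χ b ≤ 0 := by
        intro b hb
        have hbL : b ∉ L := fun h => hL ⟨b, Finset.mem_inter.2 ⟨hb, h⟩⟩
        by_cases hbR : b ∈ R
        · rw [hχR b hbR]; norm_num
        · rw [hχ0 b hbL hbR]
      by_cases hR : (e ∩ R).Nonempty
      · have hinf : e.inf' hne χ = -1 := by
          obtain ⟨u, hu⟩ := hR
          rw [Finset.mem_inter] at hu
          refine le_antisymm ?_ (Finset.le_inf' _ _ fun b _ => hgem1 b)
          calc e.inf' hne χ ≤ χ u := Finset.inf'_le χ hu.1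
          _ = -1 := hχR u hu.2
        by_cases hO : (e ∩ (L ∪ R)ᶜ).Nonempty
        · have hsup : e.sup' hne χ = 0 := by
            obtain ⟨u, hu⟩ := hO
            rw [Finset.mem_inter, Finset.mem_compl, Finset.mem_union] at hu
            push_neg at hu
            refine le_antisymm (Finset.sup'_le _ _ hsup_le) ?_
            calc (0:ℝ) = χ u := (hχ0 u hu.2.1 hu.2.2).symm
            _ ≤ _ := Finset.le_sup' χ hu.1
          have hP4 : (e ∩ R).Nonempty ∧ (e ∩ (L ∪ R)ᶜ).Nonempty ∧ e ∩ L = ∅ :=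
            ⟨hR, hO, Finset.not_nonempty_iff_eq_empty.1 hL⟩
          rw [hsup, hinf, if_pos hP4]
          have n1 := nn ((e ∩ L).Nonempty ∧ (e ∩ L).Nonempty ∧ e ∩ Lᶜ = ∅)
          have n2 := nn ((e ∩ R).Nonempty ∧ (e ∩ R).Nonempty ∧ e ∩ Rᶜ = ∅)
          have n3 := nn ((e ∩ L).Nonempty ∧ (e ∩ (L ∪ R)ᶜ).Nonempty ∧ e ∩ R = ∅)
          nlinarith [hwe]
        · have heR : e ∩ Rᶜ = ∅ := by
            rw [← Finset.not_nonempty_iff_eq_empty]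
            rintro ⟨u, hu⟩
            rw [Finset.mem_inter, Finset.mem_compl] at hu
            have huL : u ∉ L := fun h => hL ⟨u, Finset.mem_inter.2 ⟨hu.1, h⟩⟩
            have huO : u ∉ (L ∪ R)ᶜ := fun h => hO ⟨u, Finset.mem_inter.2 ⟨hu.1, h⟩⟩
            rw [Finset.mem_compl, Finset.mem_union, not_not] at huO
            exact hu.2 (huO.resolve_left huL)
          have hsup : e.sup' hne χ = -1 := by
            obtain ⟨u, hu⟩ := hR
            rw [Finset.mem_inter] at hu
            refine le_antisymm ?_ ?_
            · refine Finset.sup'_le _ _ fun b hb => ?_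
              have hbR : b ∈ R := by
                by_contra hnb
                have hmem : b ∈ e ∩ Rᶜ := Finset.mem_inter.2 ⟨hb, Finset.mem_compl.2 hnb⟩
                rw [heR] at hmem
                exact absurd hmem (Finset.notMem_empty b)
              rw [hχR b hbR]
            · calc (-1:ℝ) = χ u := (hχR u hu.2).symm
              _ ≤ _ := Finset.le_sup' χ hu.1
          rw [hsup, hinf]
          have hP2 : (e ∩ R).Nonempty ∧ (e ∩ R).Nonempty ∧ e ∩ Rᶜ = ∅ := ⟨hR, hR, heR⟩
          rw [if_pos hP2]
          have n1 := nn ((e ∩ L).Nonempty ∧ (e ∩ L).Nonempty ∧ e ∩ Lᶜ = ∅)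
          have n3 := nn ((e ∩ L).Nonempty ∧ (e ∩ (L ∪ R)ᶜ).Nonempty ∧ e ∩ R = ∅)
          have n4 := nn ((e ∩ R).Nonempty ∧ (e ∩ (L ∪ R)ᶜ).Nonempty ∧ e ∩ L = ∅)
          nlinarith [hwe]
      · have hz : ∀ b ∈ e, χ b = 0 := by
          intro b hb
          have hbL : b ∉ L := fun h => hL ⟨b, Finset.mem_inter.2 ⟨hb, h⟩⟩
          have hbR : b ∉ R := fun h => hR ⟨b, Finset.mem_inter.2 ⟨hb, h⟩⟩
          exact hχ0 b hbL hbR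
        have hsup : e.sup' hne χ = 0 := by
          obtain ⟨u, hu⟩ := hE e he
          refine le_antisymm (Finset.sup'_le _ _ fun b hb => (hz b hb).le) ?_
          calc (0:ℝ) = χ u := (hz u hu).symm
          _ ≤ _ := Finset.le_sup' χ hu
        have hinf : e.inf' hne χ = 0 := by
          obtain ⟨u, hu⟩ := hE e he
          refine le_antisymm ?_ (Finset.le_inf' _ _ fun b hb => (hz b hb).ge)
          calc e.inf' hne χ ≤ χ u := Finset.inf'_le χ hu
          _ = 0 := hz u hu
        rw [hsup, hinf]
        have n1 := nn ((e ∩ L).Nonempty ∧ (e ∩ L).Nonempty ∧ e ∩ Lᶜ = ∅)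
        have n2 := nn ((e ∩ R).Nonempty ∧ (e ∩ R).Nonempty ∧ e ∩ Rᶜ = ∅)
        have n3 := nn ((e ∩ L).Nonempty ∧ (e ∩ (L ∪ R)ᶜ).Nonempty ∧ e ∩ R = ∅)
        have n4 := nn ((e ∩ R).Nonempty ∧ (e ∩ (L ∪ R)ᶜ).Nonempty ∧ e ∩ L = ∅)
        nlinarith
  have hnum : (∑ e ∈ E.attach,
      w e.1 * (e.1.sup' (hE e.1 e.2) χ + e.1.inf' (hE e.1 e.2) χ) ^ 2) ≤ 2 * N := by
    have h1 : (∑ e ∈ E.attach,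
        w e.1 * (e.1.sup' (hE e.1 e.2) χ + e.1.inf' (hE e.1 e.2) χ) ^ 2)
        = ∑ e ∈ E, F e := by
      rw [← Finset.sum_attach E F]
      refine Finset.sum_congr rfl fun e _ => ?_
      rw [hF]; simp [hE e.1 e.2]
    have h2 : (2:ℝ) * N = ∑ e ∈ E, G e := by
      rw [hN, hG]
      unfold cutw
      rw [Finset.mul_sum, Finset.mul_sum]
      rw [← Finset.sum_add_distrib, ← Finset.sum_add_distrib, ← Finset.sum_add_distrib,
        Finset.mul_sum]
    rw [h1, h2]
    exact Finset.sum_le_sum key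
  -- conclude
  unfold discH betaH
  rw [hden, ← hN, ← mul_div_assoc]
  exact div_le_div_of_nonneg_right hnum hvol.le
end

section
/- Let H = (V, E, w) be a hypergraph and f ∈ ℝⁿ a nonzero vector with D(f) = γ. Then there exist disjoint sets L, R ⊆ V, not both empty, with bipartiteness ratio β_H(L,R) ≤ √(2γ). -/
open scoped Classical

/-!
Random threshold rounding. For `r > 0` let `L_r = {f ≤ -r}` and `R_r = {f ≥ r}`, and draw
`r ^ 2` uniformly from `[0, max f ^ 2]`. The expected volume of `L_r ∪ R_r` is
`∑ᵥ deg v * f v ^ 2`, while an edge on which `f` has maximum `a` and minimum `b` adds at most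
`w e * |a + b| * √(2 ∑_{v ∈ e} f v ^ 2)` to the expected numerator of `β_H(L_r, R_r)`.
By Cauchy–Schwarz the expected numerator is at most `√(2γ)` times the expected volume, so some
threshold does at least as well. Both quantities are step functions of `r` jumping only at the
values `|f v|`, so the expectation is a finite sum over these values.
-/

open Finset

noncomputable section

def gridPred (T : Finset ℝ) (r : ℝ) : ℝ :=
  (insert 0 (T.filter (· < r))).max' (insert_nonempty _ _)

lemma gridPred_nonneg (T : Finset ℝ) (r : ℝ) : 0 ≤ gridPred T r :=
  le_max' _ _ (mem_insert_self _ _)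

lemma gridPred_lt (T : Finset ℝ) {r : ℝ} (hr : 0 < r) : gridPred T r < r := by
  simp only [gridPred, max'_lt_iff, mem_insert, mem_filter]
  rintro s (rfl | ⟨-, hs⟩) <;> assumption

lemma gridPred_insert_of_not_lt (s : Finset ℝ) {a r : ℝ} (h : ¬a < r) :
    gridPred (insert a s) r = gridPred s r := by
  simp only [gridPred, filter_insert, if_neg h]

lemma gridPred_insert_of_forall_lt (s : Finset ℝ) {a : ℝ} (hs : ∀ x ∈ s, x < a) :
    gridPred (insert a s) a = (insert 0 s).max' (insert_nonempty _ _) := by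
  simp only [gridPred, filter_insert, lt_irrefl, if_false, filter_true_of_mem hs]

theorem sum_filter_le_sub_gridPred (g : ℝ → ℝ) {T : Finset ℝ} (hT : ∀ r ∈ T, 0 < r) {β : ℝ}
    (hβ : β ∈ insert 0 T) : ∑ r ∈ T with r ≤ β, (g r - g (gridPred T r)) = g β - g 0 := by
  induction T using Finset.induction_on_max generalizing β with
  | empty => simp_all
  | insert a s hs ih =>
    have hsT : ∀ r ∈ s, 0 < r := fun r hr => hT r (mem_insert_of_mem hr)
    have hpred : ∀ r ∈ s, gridPred (insert a s) r = gridPred s r :=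
      fun r hr => gridPred_insert_of_not_lt s (hs r hr).not_gt
    by_cases hβa : β = a
    · subst hβa
      set β' := (insert 0 s).max' (insert_nonempty _ _)
      have hsum : ∑ r ∈ s, (g r - g (gridPred s r)) = g β' - g 0 := by
        rw [← ih hsT (max'_mem _ _),
          filter_true_of_mem fun r hr => le_max' _ _ (mem_insert_of_mem hr)]
      rw [filter_insert, if_pos le_rfl, filter_true_of_mem fun r hr => (hs r hr).le,
        sum_insert fun h => (hs β h).false, gridPred_insert_of_forall_lt s hs,
        sum_congr rfl fun r hr => by rw [hpred r hr], hsum]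
      ring
    · have hβs : β ∈ insert 0 s := by
        simp only [mem_insert] at hβ ⊢; tauto
      have hβlt : β < a := by
        rcases mem_insert.1 hβs with rfl | hβs
        exacts [hT a (mem_insert_self _ _), hs β hβs]
      rw [filter_insert, if_neg hβlt.not_ge,
        sum_congr rfl fun r hr => by rw [hpred r (mem_filter.1 hr).1], ih hsT hβs]

/-- Up to normalisation, the probability that `√t` rounds up to `r ∈ T` in the grid `{0} ∪ T`
when `t` is drawn uniformly from `[0, (max T) ^ 2]`. -/
def layerWeight (T : Finset ℝ) (r : ℝ) : ℝ :=
  r ^ 2 - gridPred T r ^ 2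

lemma layerWeight_pos (T : Finset ℝ) {r : ℝ} (hr : 0 < r) : 0 < layerWeight T r :=
  sub_pos.2 (pow_lt_pow_left₀ (gridPred_lt T hr) (gridPred_nonneg T r) two_ne_zero)

lemma sum_layerWeight_mul_ite_le_eq {T : Finset ℝ} (hT : ∀ r ∈ T, 0 < r) {β : ℝ}
    (hβ : β ∈ insert 0 T) (c : ℝ) :
    ∑ r ∈ T, layerWeight T r * (if r ≤ β then c else 0) = c * β ^ 2 := by
  simp only [mul_ite, mul_zero]
  rw [← sum_filter, ← sum_mul]
  simp only [layerWeight]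
  rw [sum_filter_le_sub_gridPred (· ^ 2) hT hβ]
  ring

/-- `edgeCost` at the sweep sets of threshold `r` of an edge on which `f` has maximum `a`,
minimum `b` and minimal absolute value `μ`. -/
def thresholdCost (a b μ r : ℝ) : ℝ :=
  if b ≤ -r ↔ r ≤ a then 0 else if μ < r then 1 else 2

lemma thresholdCost_neg_swap (a b μ r : ℝ) :
    thresholdCost (-b) (-a) μ r = thresholdCost a b μ r := by
  simp only [thresholdCost, neg_le_neg_iff, le_neg (b := b), Iff.comm]

theorem sum_layerWeight_mul_thresholdCost_le {T : Finset ℝ} (hT : ∀ r ∈ T, 0 < r)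
    {a b μ s : ℝ} (hba : b ≤ a) (hμa : μ ≤ |a|) (hμb : μ ≤ |b|) (ha : |a| ∈ insert 0 T)
    (hb : |b| ∈ insert 0 T) (hμ : μ ∈ insert 0 T) (has : |a| ≤ s) (hbs : |b| ≤ s)
    (habs : a - b ≤ s) :
    ∑ r ∈ T, layerWeight T r * thresholdCost a b μ r ≤ |a + b| * s := by
  -- `(a, b) ↦ (-b, -a)` is the substitution `f ↦ -f`, which swaps the two sweep sets.
  wlog hab : a + b ≤ 0 generalizing a b
  · have := this (neg_le_neg hba) (by rwa [abs_neg]) (by rwa [abs_neg]) (by rwa [abs_neg])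
      (by rwa [abs_neg]) (by rwa [abs_neg]) (by rwa [abs_neg]) (by linarith) (by linarith)
    simpa only [thresholdCost_neg_swap, ← neg_add, abs_neg, add_comm b a] using this
  have hμ0 : 0 ≤ μ := by
    rcases mem_insert.1 hμ with rfl | hμ
    exacts [le_rfl, (hT μ hμ).le]
  rw [abs_of_nonpos hab]
  have hb0 : |b| = -b := abs_of_nonpos (by linarith)
  have hnegb : ∀ r, b ≤ -r ↔ r ≤ |b| := fun r => by rw [hb0, le_neg]
  rcases le_or_gt a 0 with ha0 | ha0
  · have hcost : ∀ r ∈ T, thresholdCost a b μ r =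
        (if r ≤ |b| then 1 else 0) + (if r ≤ μ then 1 else 0) := by
      intro r hr
      have hra : ¬r ≤ a := by linarith [hT r hr]
      simp only [thresholdCost, hnegb, hra, iff_false]
      split_ifs <;> linarith
    rw [sum_congr rfl fun r hr => by rw [hcost r hr, mul_add], sum_add_distrib,
      sum_layerWeight_mul_ite_le_eq hT hb, sum_layerWeight_mul_ite_le_eq hT hμ, hb0]
    rw [abs_of_nonpos ha0] at hμa
    rw [hb0] at hbs
    -- `b² + μ² ≤ b² + a b = |b| |a + b|`
    nlinarith [mul_le_mul_of_nonneg_right hbs (neg_nonneg.2 hab),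
      mul_nonneg_of_nonpos_of_nonpos ha0 (sub_nonpos.2 hba), mul_self_le_mul_self hμ0 hμa]
  · rw [abs_of_pos ha0] at hμa ha
    have hcost : ∀ r ∈ T, thresholdCost a b μ r =
        (if r ≤ |b| then 1 else 0) - (if r ≤ a then 1 else 0) := by
      intro r hr
      simp only [thresholdCost, hnegb]
      by_cases hra : r ≤ a
      · simp only [hra, (show r ≤ |b| by linarith), if_true, iff_self, sub_self]
      · simp only [hra, iff_false, (show μ < r by linarith), if_true, if_false, sub_zero]
        split_ifs <;> linarith
    rw [sum_congr rfl fun r hr => by rw [hcost r hr, mul_sub], sum_sub_distrib,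
      sum_layerWeight_mul_ite_le_eq hT hb, sum_layerWeight_mul_ite_le_eq hT ha, hb0]
    -- `b² - a² = |a + b| (a - b)`
    nlinarith [mul_le_mul_of_nonneg_right habs (neg_nonneg.2 hab)]

lemma sum_mul_abs_mul_sqrt_le {ι : Type*} (s : Finset ι) {w x y : ι → ℝ}
    (hw : ∀ i ∈ s, 0 ≤ w i) (hy : ∀ i ∈ s, 0 ≤ y i) :
    ∑ i ∈ s, w i * (|x i| * √(y i)) ≤ √((∑ i ∈ s, w i * x i ^ 2) * ∑ i ∈ s, w i * y i) := by
  refine Real.le_sqrt_of_sq_le (sum_sq_le_sum_mul_sum_of_sq_le_mul s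
    (fun i hi => mul_nonneg (hw i hi) (sq_nonneg _)) (fun i hi => mul_nonneg (hw i hi) (hy i hi))
    fun i hi => le_of_eq ?_)
  rw [mul_pow, mul_pow, sq_abs, Real.sq_sqrt (hy i hi)]
  ring

section SumSq

variable {V : Type*} {e : Finset V}

lemma sub_le_sqrt_two_mul_sum_sq (f : V → ℝ) {u u' : V} (hu : u ∈ e) (hu' : u' ∈ e) :
    f u - f u' ≤ √(2 * ∑ v ∈ e, f v ^ 2) := by
  classical
  apply Real.le_sqrt_of_sq_le
  rcases eq_or_ne u u' with rfl | huu'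
  · simpa using sum_nonneg fun v _ => sq_nonneg (f v)
  have hpair : f u ^ 2 + f u' ^ 2 ≤ ∑ v ∈ e, f v ^ 2 :=
    calc f u ^ 2 + f u' ^ 2 = ∑ v ∈ {u, u'}, f v ^ 2 :=
          (sum_pair (f := fun v => f v ^ 2) huu').symm
      _ ≤ ∑ v ∈ e, f v ^ 2 := sum_le_sum_of_subset_of_nonneg
          (insert_subset hu (singleton_subset_iff.2 hu')) fun v _ _ => sq_nonneg (f v)
  nlinarith [sq_nonneg (f u + f u')]

lemma abs_le_sqrt_two_mul_sum_sq (f : V → ℝ) {u : V} (hu : u ∈ e) :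
    |f u| ≤ √(2 * ∑ v ∈ e, f v ^ 2) := by
  apply Real.abs_le_sqrt
  have := single_le_sum (fun v _ => sq_nonneg (f v)) hu
  nlinarith [sq_nonneg (f u)]

end SumSq

section Sweep

variable {V : Type*} [Fintype V]

def negSweep (f : V → ℝ) (r : ℝ) : Finset V := {v | f v ≤ -r}

def posSweep (f : V → ℝ) (r : ℝ) : Finset V := {v | r ≤ f v}

/-- The sweep sets of `f` change only at these thresholds. -/
def absGrid (f : V → ℝ) : Finset ℝ := (univ.image fun v => |f v|).filter (0 < ·)

lemma pos_of_mem_absGrid {f : V → ℝ} {r : ℝ} (hr : r ∈ absGrid f) : 0 < r :=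
  (mem_filter.1 hr).2

lemma abs_mem_insert_absGrid (f : V → ℝ) (v : V) : |f v| ∈ insert 0 (absGrid f) := by
  rcases (abs_nonneg (f v)).eq_or_lt with h | h
  · exact h ▸ mem_insert_self _ _
  · exact mem_insert_of_mem (mem_filter.2 ⟨mem_image_of_mem _ (mem_univ v), h⟩)

lemma absGrid_nonempty {f : V → ℝ} (hf : f ≠ 0) : (absGrid f).Nonempty := by
  obtain ⟨v, hv⟩ := Function.ne_iff.1 hf
  exact ⟨|f v|, mem_filter.2 ⟨mem_image_of_mem _ (mem_univ v), abs_pos.2 hv⟩⟩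

lemma disjoint_negSweep_posSweep (f : V → ℝ) {r : ℝ} (hr : 0 < r) :
    Disjoint (negSweep f r) (posSweep f r) := by
  simp only [negSweep, posSweep, disjoint_left, mem_filter, mem_univ, true_and]
  intro v h1 h2
  linarith

lemma mem_negSweep_union_posSweep [DecidableEq V] {f : V → ℝ} {r : ℝ} {v : V} :
    v ∈ negSweep f r ∪ posSweep f r ↔ r ≤ |f v| := by
  simp [negSweep, posSweep, le_abs']

lemma negSweep_union_posSweep_nonempty [DecidableEq V] {f : V → ℝ} {r : ℝ}
    (hr : r ∈ absGrid f) :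
    (negSweep f r ∪ posSweep f r).Nonempty := by
  obtain ⟨v, -, rfl⟩ := mem_image.1 (mem_filter.1 hr).1
  exact ⟨v, mem_negSweep_union_posSweep.2 le_rfl⟩

theorem sum_layerWeight_mul_sum_sweep [DecidableEq V] (f d : V → ℝ) :
    ∑ r ∈ absGrid f, layerWeight (absGrid f) r * ∑ v ∈ negSweep f r ∪ posSweep f r, d v =
      ∑ v, d v * f v ^ 2 := by
  have hsweep : ∀ r, ∑ v ∈ negSweep f r ∪ posSweep f r, d v =
      ∑ v, if r ≤ |f v| then d v else 0 := fun r => by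
    rw [← sum_filter]
    congr 1
    ext v
    simp only [mem_filter, mem_univ, true_and, mem_negSweep_union_posSweep]
  simp only [hsweep, mul_sum]
  rw [sum_comm]
  refine sum_congr rfl fun v _ => ?_
  rw [sum_layerWeight_mul_ite_le_eq (fun _ => pos_of_mem_absGrid) (abs_mem_insert_absGrid f v),
    sq_abs]

end Sweep

section Cost

variable {V : Type*} [Fintype V] [DecidableEq V]

def edgeCost (L R e : Finset V) : ℝ :=
  if (e ∩ L).Nonempty ↔ (e ∩ R).Nonempty then 0 else if (e ∩ (L ∪ R)ᶜ).Nonempty then 1 else 2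

lemma inter_compl_eq_empty_iff {L R : Finset V} (hLR : Disjoint L R) (e : Finset V) :
    e ∩ Lᶜ = ∅ ↔ ¬(e ∩ R).Nonempty ∧ ¬(e ∩ (L ∪ R)ᶜ).Nonempty := by
  have hL : Lᶜ = R ∪ (L ∪ R)ᶜ := by
    ext v
    have := @disjoint_left.1 hLR v
    simp only [mem_compl, mem_union]
    tauto
  rw [hL, inter_union_distrib_left, union_eq_empty, not_nonempty_iff_eq_empty,
    not_nonempty_iff_eq_empty]

theorem betaH_eq_sum_edgeCost (E : Finset (Finset V)) (w : Finset V → ℝ) {L R : Finset V}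
    (hLR : Disjoint L R) :
    betaH E w L R = (∑ e ∈ E, w e * edgeCost L R e) / volH E w (L ∪ R) := by
  simp only [betaH, cutw, mul_sum, ← sum_add_distrib]
  congr 1
  refine sum_congr rfl fun e _ => ?_
  simp only [inter_compl_eq_empty_iff hLR, inter_compl_eq_empty_iff hLR.symm, union_comm R L,
    ← not_nonempty_iff_eq_empty, edgeCost]
  by_cases hL : (e ∩ L).Nonempty <;> by_cases hR : (e ∩ R).Nonempty <;>
    by_cases hM : (e ∩ (L ∪ R)ᶜ).Nonempty <;> simp [hL, hR, hM, -compl_union] <;> ring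

end Cost

section Edge

variable {V : Type*} [Fintype V] [DecidableEq V] {f : V → ℝ} {e : Finset V}

lemma inter_negSweep_nonempty_iff (he : e.Nonempty) (r : ℝ) :
    (e ∩ negSweep f r).Nonempty ↔ e.inf' he f ≤ -r := by
  simp [Finset.Nonempty, negSweep, inf'_le_iff]

lemma inter_posSweep_nonempty_iff (he : e.Nonempty) (r : ℝ) :
    (e ∩ posSweep f r).Nonempty ↔ r ≤ e.sup' he f := by
  simp [Finset.Nonempty, posSweep, le_sup'_iff]

lemma inter_compl_sweep_nonempty_iff (he : e.Nonempty) (r : ℝ) :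
    (e ∩ (negSweep f r ∪ posSweep f r)ᶜ).Nonempty ↔ e.inf' he (fun v => |f v|) < r := by
  simp only [Finset.Nonempty, mem_inter, mem_compl, mem_negSweep_union_posSweep, not_le,
    inf'_lt_iff]

lemma edgeCost_sweep_eq (he : e.Nonempty) (r : ℝ) :
    edgeCost (negSweep f r) (posSweep f r) e =
      thresholdCost (e.sup' he f) (e.inf' he f) (e.inf' he fun v => |f v|) r := by
  simp only [edgeCost, thresholdCost, inter_negSweep_nonempty_iff he,
    inter_posSweep_nonempty_iff he, inter_compl_sweep_nonempty_iff he]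

theorem sum_layerWeight_mul_edgeCost_le (f : V → ℝ) (he : e.Nonempty) :
    ∑ r ∈ absGrid f, layerWeight (absGrid f) r * edgeCost (negSweep f r) (posSweep f r) e ≤
      |e.sup' he f + e.inf' he f| * √(2 * ∑ v ∈ e, f v ^ 2) := by
  obtain ⟨u, hu, ha⟩ := exists_mem_eq_sup' he f
  obtain ⟨u', hu', hb⟩ := exists_mem_eq_inf' he f
  obtain ⟨u'', -, hμ⟩ := exists_mem_eq_inf' he fun v => |f v|
  simp only [edgeCost_sweep_eq he]
  refine sum_layerWeight_mul_thresholdCost_le (fun _ => pos_of_mem_absGrid)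
    ((inf'_le f hu).trans (le_sup' f hu)) (by rw [ha]; exact inf'_le _ hu)
    (by rw [hb]; exact inf'_le _ hu') (by rw [ha]; exact abs_mem_insert_absGrid f u)
    (by rw [hb]; exact abs_mem_insert_absGrid f u')
    (by rw [hμ]; exact abs_mem_insert_absGrid f u'')
    (by rw [ha]; exact abs_le_sqrt_two_mul_sum_sq f hu)
    (by rw [hb]; exact abs_le_sqrt_two_mul_sum_sq f hu')
    (by rw [ha, hb]; exact sub_le_sqrt_two_mul_sum_sq f hu hu')

end Edge

section Hypergraph

variable {V : Type*} [Fintype V]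

lemma sum_mul_sum_eq_sum_degH_mul (E : Finset (Finset V)) (w : Finset V → ℝ) (g : V → ℝ) :
    ∑ e ∈ E, w e * ∑ v ∈ e, g v = ∑ v, degH E w v * g v := by
  simp only [degH, sum_mul, ite_mul, zero_mul, mul_sum]
  rw [sum_comm]
  exact sum_congr rfl fun e _ => (sum_ite_mem_eq e _).symm

theorem sum_layerWeight_mul_sweep_cut_le [DecidableEq V] (E : Finset (Finset V))
    (w : Finset V → ℝ) (hw : ∀ e ∈ E, 0 ≤ w e) (hE : ∀ e ∈ E, e.Nonempty) (f : V → ℝ) :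
    ∑ r ∈ absGrid f, layerWeight (absGrid f) r *
        ∑ e ∈ E, w e * edgeCost (negSweep f r) (posSweep f r) e ≤
      √((∑ e ∈ E.attach, w e * (e.1.sup' (hE e.1 e.2) f + e.1.inf' (hE e.1 e.2) f) ^ 2) *
        (2 * ∑ v, degH E w v * f v ^ 2)) := by
  calc _ = ∑ e ∈ E.attach, w e * ∑ r ∈ absGrid f,
          layerWeight (absGrid f) r * edgeCost (negSweep f r) (posSweep f r) e := by
        simp only [mul_sum, mul_left_comm (layerWeight _ _)]
        rw [sum_comm, sum_attach E fun e => ∑ r ∈ absGrid f,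
          w e * (layerWeight (absGrid f) r * edgeCost (negSweep f r) (posSweep f r) e)]
    _ ≤ ∑ e ∈ E.attach, w e * (|e.1.sup' (hE e.1 e.2) f + e.1.inf' (hE e.1 e.2) f| *
          √(2 * ∑ v ∈ e.1, f v ^ 2)) :=
        sum_le_sum fun e _ => mul_le_mul_of_nonneg_left
          (sum_layerWeight_mul_edgeCost_le f (hE e.1 e.2)) (hw e.1 e.2)
    _ ≤ _ := sum_mul_abs_mul_sqrt_le _ (fun e _ => hw e.1 e.2) fun e _ => by positivity
    _ = _ := by
        rw [sum_attach E fun e => w e * (2 * ∑ v ∈ e, f v ^ 2),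
          ← sum_mul_sum_eq_sum_degH_mul, mul_sum _ _ (2 : ℝ)]
        simp only [mul_left_comm (2 : ℝ)]

theorem exists_mem_absGrid_sweep_cut_le [DecidableEq V] (E : Finset (Finset V))
    (w : Finset V → ℝ) (hw : ∀ e ∈ E, 0 ≤ w e) (hE : ∀ e ∈ E, e.Nonempty)
    (hdeg : ∀ v, 0 < degH E w v) {f : V → ℝ} (hf : f ≠ 0) :
    ∃ r ∈ absGrid f, ∑ e ∈ E, w e * edgeCost (negSweep f r) (posSweep f r) e ≤
      √(2 * discH E w hE (degH E w) f) * volH E w (negSweep f r ∪ posSweep f r) := by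
  set D := ∑ v, degH E w v * f v ^ 2
  have hD : 0 < D := by
    obtain ⟨v, hv⟩ := Function.ne_iff.1 hf
    exact sum_pos' (fun u _ => mul_nonneg (hdeg u).le (sq_nonneg _))
      ⟨v, mem_univ v, mul_pos (hdeg v) (sq_pos_of_ne_zero hv)⟩
  have hnum := div_mul_cancel₀ (∑ e ∈ E.attach,
    w e * (e.1.sup' (hE e.1 e.2) f + e.1.inf' (hE e.1 e.2) f) ^ 2) hD.ne'
  set γ := discH E w hE (degH E w) f
  have hcut : ∑ r ∈ absGrid f, layerWeight (absGrid f) r *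
        ∑ e ∈ E, w e * edgeCost (negSweep f r) (posSweep f r) e ≤
      ∑ r ∈ absGrid f, layerWeight (absGrid f) r *
        (√(2 * γ) * volH E w (negSweep f r ∪ posSweep f r)) :=
    calc _ ≤ √(γ * D * (2 * D)) := hnum ▸ sum_layerWeight_mul_sweep_cut_le E w hw hE f
      _ = √(2 * γ) * D := by
          rw [show γ * D * (2 * D) = 2 * γ * D ^ 2 by ring, Real.sqrt_mul' _ (sq_nonneg D),
            Real.sqrt_sq hD.le]
      _ = _ := by
          simp only [volH, mul_left_comm (layerWeight _ _), ← mul_sum,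
            sum_layerWeight_mul_sum_sweep, D]
  obtain ⟨r, hr, hle⟩ := exists_le_of_sum_le (absGrid_nonempty hf) hcut
  exact ⟨r, hr, le_of_mul_le_mul_left hle (layerWeight_pos _ (pos_of_mem_absGrid hr))⟩

end Hypergraph

end

theorem stmt_10 {V : Type*} [Fintype V] [DecidableEq V]
    (E : Finset (Finset V)) (w : Finset V → ℝ) (hw : ∀ e ∈ E, 0 < w e)
    (hE : ∀ e ∈ E, e.Nonempty)
    (hdegpos : ∀ v, 0 < degH E w v)
    (f : V → ℝ) (hf : f ≠ 0) (γ : ℝ) (hγ : discH E w hE (degH E w) f = γ) :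
    ∃ L R : Finset V, Disjoint L R ∧ (L ∪ R).Nonempty ∧
      betaH E w L R ≤ Real.sqrt (2 * γ) := by
  obtain ⟨r, hr, hle⟩ :=
    exists_mem_absGrid_sweep_cut_le E w (fun e he => (hw e he).le) hE hdegpos hf
  have hLR := disjoint_negSweep_posSweep f (pos_of_mem_absGrid hr)
  have hne := negSweep_union_posSweep_nonempty hr
  have hvol : 0 < volH E w (negSweep f r ∪ posSweep f r) := sum_pos (fun v _ => hdegpos v) hne
  refine ⟨negSweep f r, posSweep f r, hLR, hne, ?_⟩
  rw [betaH_eq_sum_edgeCost E w hLR, div_le_iff₀ hvol, ← hγ]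
  exact hle
end
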